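/- arXiv:2301.12014 — 3 statements merged into one kernel-verified Lean document; each statement's English description precedes it below -/
import Mathlib

section
/- Let G be a non-archimedean CLI Polish group. Then: (1) G is 0-CLI if and only if G = {1_G}; (2) G is L-0-CLI if and only if G is discrete; (3) G is 1-CLI if and only if G is TSI, i.e., G admits a compatible complete two-sided invariant metric. -/
/-!
Fix `𝒢 = (G_n) ∈ dgnb(G)` and read `T_𝒢^{X(𝒢)}` as the tree of non-singleton `G_n`-orbits of the
action of `G` on `X(𝒢) = ⊔_k G/G_k`. CLI makes it well-founded: along an infinite branch the
translating elements form a left-Cauchy sequence, and near its limit the orbits become singletons.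
Its rank is governed by when `G_m` starts acting trivially on `G/G_k`, i.e. `G_m ≤ core(G_k)`.
If `G_m = 1` the tree has height `≤ m`, and if each `G/G_k` is fixed pointwise by some `G_{m_k}`
then `ρ(𝒢) ≤ ω`. Conversely a `g ∈ G_N` moving a point gives a branch of length `N`, so
`N < ρ(𝒢)`; if this happens inside one `G/G_k` for every `N`, the root over `G/G_k` has rank `≥ ω`.
This gives (1) and (2), and shows that `G` is `1`-CLI iff the normal cores of the `G_k` are open.
Open normal subgroups `N_k` forming a basis give the two-sided invariant ultrametric
`d(g, h) = 2^{-k}`, `k` least with `g⁻¹h ∉ N_k`, which is complete because it is uniformly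
equivalent to the CLI metric; conversely the balls around `1` of a two-sided invariant metric are
conjugation invariant, so they contain the normal cores of small open subgroups.
-/

noncomputable section

/-- `omegaPart a` is ω(a): the largest limit ordinal `≤ a`, or `0` if there is none. -/
def omegaPart (a : Ordinal) : Ordinal :=
  sSup {b : Ordinal | (b = 0 ∨ Order.IsSuccLimit b) ∧ b ≤ a}

/-- `IsTree lt` says that the binary relation `lt` on `T` is a tree order: it is irreflexive,
transitive, and the set of predecessors of any node is finite and linearly ordered. -/
def IsTree {T : Type*} (lt : T → T → Prop) : Prop :=
  (∀ s, ¬ lt s s) ∧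
  (∀ s t u, lt s t → lt t u → lt s u) ∧
  (∀ s, {t | lt t s}.Finite) ∧
  (∀ s t u, lt t s → lt u s → t = u ∨ lt t u ∨ lt u t)

/-- The length `lh s` of a node of a tree: the number of its strict predecessors. -/
def lh {T : Type*} (lt : T → T → Prop) (s : T) : ℕ :=
  Nat.card {t | lt t s}

/-- The rank `ρ(T)` of a tree `(T, lt)`: for a well-founded tree it is
`sup { ρ_T(s) + 1 : s ∈ T }` where `ρ_T(s) = sup { ρ_T(t) + 1 : s < t }`;
for an ill-founded tree we use the junk value `0`. -/
def rhoRel {T : Type u} (lt : T → T → Prop) : Ordinal.{u} :=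
  letI := Classical.dec (WellFounded (Function.swap lt))
  if h : WellFounded (Function.swap lt) then ⨆ s : T, Order.succ ((h.apply s).rank) else 0

/-- The nodes of the tree `T_ℰ^X` associated to a sequence `E` of (equivalence) relations
on `X`: pairs `(n, C)` where `C` is a non-singleton class `[x]_{E n}`. -/
def TreeNode (X : Type u) (E : ℕ → X → X → Prop) : Type u :=
  {p : ℕ × Set X // ∃ x : X, p.2 = {y | E p.1 x y} ∧ p.2 ≠ {x}}

/-- The tree order on `T_ℰ^X`: `(n, C) < (m, D)` iff `n < m` and `C ⊇ D`. -/
def nodeLT {X : Type u} (E : ℕ → X → X → Prop) :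
    TreeNode X E → TreeNode X E → Prop :=
  fun s t => s.1.1 < t.1.1 ∧ t.1.2 ⊆ s.1.2

/-- The tree `T_ℰ^X` is well-founded: no infinite strictly increasing sequence. -/
def TreeWF (X : Type u) (E : ℕ → X → X → Prop) : Prop :=
  WellFounded (Function.swap (nodeLT E))

/-- The rank `ρ(T_ℰ^X)`. -/
def treeRho (X : Type u) (E : ℕ → X → X → Prop) : Ordinal.{u} :=
  rhoRel (nodeLT E)

/-- A Polish group: a topological group whose topology is Polish. -/
def IsPolishGroup (G : Type u) [Group G] [TopologicalSpace G] : Prop :=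
  IsTopologicalGroup G ∧ PolishSpace G

/-- A topological group is non-archimedean if the open subgroups form a
neighborhood base of the identity. -/
def IsNonArch (G : Type u) [Group G] [TopologicalSpace G] : Prop :=
  ∀ U ∈ nhds (1 : G), ∃ H : Subgroup G, IsOpen (H : Set G) ∧ (H : Set G) ⊆ U

/-- A topological group is CLI if it admits a compatible complete left-invariant metric. -/
def IsCLI (G : Type u) [Group G] [TopologicalSpace G] : Prop :=
  ∃ m : MetricSpace G,
    m.toUniformSpace.toTopologicalSpace = ‹TopologicalSpace G› ∧
    @CompleteSpace G m.toUniformSpace ∧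
    ∀ g h k : G, m.dist (g * h) (g * k) = m.dist h k

/-- A topological group is TSI if it admits a compatible complete two-sided-invariant metric. -/
def IsTSI (G : Type u) [Group G] [TopologicalSpace G] : Prop :=
  ∃ m : MetricSpace G,
    m.toUniformSpace.toTopologicalSpace = ‹TopologicalSpace G› ∧
    @CompleteSpace G m.toUniformSpace ∧
    ∀ g h k : G, m.dist (g * h) (g * k) = m.dist h k ∧ m.dist (h * g) (k * g) = m.dist h k

/-- `Dgnb G` is the set `dgnb(G)`: decreasing sequences `(G_n)` of open subgroups of `G`
with `G_0 = G` forming a neighborhood base of `1_G`. -/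
structure Dgnb (G : Type u) [Group G] [TopologicalSpace G] where
  seq : ℕ → Subgroup G
  isOpen : ∀ n, IsOpen ((seq n : Set G))
  antitone : ∀ n, seq (n + 1) ≤ seq n
  zero_eq_top : seq 0 = ⊤
  basis : ∀ U ∈ nhds (1 : G), ∃ n, ((seq n : Set G)) ⊆ U

/-- The orbit equivalence relation of (the action of) a subgroup `H ≤ G` on a `G`-space `X`:
`x ∼ y` iff `g • x = y` for some `g ∈ H`. -/
def subOrbit {G : Type u} [Group G] (H : Subgroup G) (X : Type v) [MulAction G X] :
    X → X → Prop :=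
  fun x y => ∃ g ∈ H, g • x = y

/-- The tree `T_𝒢^X` of a `𝒢 ∈ dgnb(G)` and a `G`-space `X`: nodes are pairs `(n, C)`
with `C` a non-singleton `G_n`-orbit. We record it by its defining sequence of relations. -/
def dgnbRel {G : Type u} [Group G] [TopologicalSpace G] (𝒢 : Dgnb G) (X : Type v)
    [MulAction G X] : ℕ → X → X → Prop :=
  fun n => subOrbit (𝒢.seq n) X

/-- `ρ^k(𝒢) = ρ(T_𝒢^{G/G_k})`, where `G` acts by left translation on `G/G_k`. -/
def rhoK {G : Type u} [Group G] [TopologicalSpace G] (𝒢 : Dgnb G) (k : ℕ) : Ordinal.{u} :=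
  treeRho (G ⧸ 𝒢.seq k) (dgnbRel 𝒢 (G ⧸ 𝒢.seq k))

/-- `ρ(𝒢) = ρ(T_𝒢^{X(𝒢)})` where `X(𝒢) = ⊔_k G/G_k` is the disjoint union of the coset
spaces, with `G` acting by left translation on each summand. -/
def rhoDgnb {G : Type u} [Group G] [TopologicalSpace G] (𝒢 : Dgnb G) : Ordinal.{u} :=
  treeRho (Σ k : ℕ, G ⧸ 𝒢.seq k)
    (fun n p q => ∃ g ∈ 𝒢.seq n, q = ⟨p.1, g • p.2⟩)

/-- `G` is α-CLI if `ρ(𝒢) ≤ ω·α` for any (equivalently, some) `𝒢 ∈ dgnb(G)`. -/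
def IsAlphaCLI (G : Type u) [Group G] [TopologicalSpace G] (α : Ordinal.{u}) : Prop :=
  ∀ 𝒢 : Dgnb G, rhoDgnb 𝒢 ≤ Ordinal.omega0 * α

/-- `G` is L-α-CLI if `rank(G) ≤ α`, i.e. `ω(ρ(𝒢)) ≤ ω·α` for any (equivalently, some)
`𝒢 ∈ dgnb(G)`. -/
def IsLAlphaCLI (G : Type u) [Group G] [TopologicalSpace G] (α : Ordinal.{u}) : Prop :=
  ∀ 𝒢 : Dgnb G, omegaPart (rhoDgnb 𝒢) ≤ Ordinal.omega0 * α

open Filter Topology Uniformity MulAction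

/-! ### Ranks of well-founded trees -/

lemma Acc.rank_le {α : Type u} {r : α → α → Prop} (f : α → Ordinal.{u})
    (hf : ∀ a b, r a b → f a < f b) {a : α} (h : Acc r a) : h.rank ≤ f a := by
  induction h with
  | intro a _ ih =>
    rw [Acc.rank_eq]
    exact Ordinal.iSup_le fun b => Order.succ_le_of_lt ((ih b b.2).trans_lt (hf _ _ b.2))

section TreeRank

variable {T : Type u} {lt : T → T → Prop}

lemma rank_lt_rhoRel (hwf : WellFounded (Function.swap lt)) (s : T) :
    (hwf.apply s).rank < rhoRel lt := by
  rw [rhoRel, dif_pos hwf]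
  exact (Order.lt_succ _).trans_le (Ordinal.le_iSup (fun s => Order.succ (hwf.apply s).rank) s)

lemma rhoRel_le_of_strictAnti (f : T → Ordinal.{u}) (hf : ∀ s t, lt s t → f t < f s)
    {c : Ordinal.{u}} (hc : ∀ s, f s < c) : rhoRel lt ≤ c := by
  have hwf : WellFounded (Function.swap lt) :=
    Subrelation.wf (fun h => hf _ _ h) (InvImage.wf f Ordinal.lt_wf)
  rw [rhoRel, dif_pos hwf]
  exact Ordinal.iSup_le fun s =>
    Order.succ_le_of_lt (((hwf.apply s).rank_le f fun a b h => hf b a h).trans_lt (hc s))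

end TreeRank

namespace TreeNode

variable {X : Type u} {E : ℕ → X → X → Prop}

def basepoint (p : TreeNode X E) : X := p.2.choose

lemma carrier_eq_setOf (p : TreeNode X E) : p.1.2 = {y | E p.1.1 p.basepoint y} :=
  p.2.choose_spec.1

lemma carrier_ne_singleton (p : TreeNode X E) : p.1.2 ≠ {p.basepoint} :=
  p.2.choose_spec.2

end TreeNode

/-! ### Orbit trees -/

section OrbitTree

variable {G : Type*} {X : Type u} [Group G] [MulAction G X]

def orbitSeqRel (H : ℕ → Subgroup G) (X : Type u) [MulAction G X] : ℕ → X → X → Prop :=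
  fun n x y => ∃ g ∈ H n, y = g • x

variable {H : ℕ → Subgroup G}

lemma setOf_orbitSeqRel_eq_singleton_iff {n : ℕ} {x : X} :
    {y | orbitSeqRel H X n x y} = {x} ↔ H n ≤ stabilizer G x := by
  refine ⟨fun h g hg => (h ▸ ⟨g, hg, rfl⟩ : g • x ∈ ({x} : Set X)), fun h => ?_⟩
  ext y
  constructor
  · rintro ⟨g, hg, rfl⟩
    exact h hg
  · rintro rfl
    exact ⟨1, one_mem _, (one_smul G y).symm⟩

def orbitNode (H : ℕ → Subgroup G) (n : ℕ) (x : X) (hx : ¬ H n ≤ stabilizer G x) :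
    TreeNode X (orbitSeqRel H X) :=
  ⟨(n, {y | orbitSeqRel H X n x y}), x, rfl, mt setOf_orbitSeqRel_eq_singleton_iff.mp hx⟩

lemma setOf_orbitSeqRel_smul {n : ℕ} {g : G} (hg : g ∈ H n) (x : X) :
    {y | orbitSeqRel H X n (g • x) y} = {y | orbitSeqRel H X n x y} := by
  ext y
  constructor
  · rintro ⟨h, hh, rfl⟩
    exact ⟨h * g, mul_mem hh hg, (mul_smul h g x).symm⟩
  · rintro ⟨h, hh, rfl⟩
    exact ⟨h * g⁻¹, mul_mem hh (inv_mem hg), by rw [smul_smul, inv_mul_cancel_right]⟩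

lemma orbitNode_smul_eq_orbitNode_smul {n : ℕ} {g g' : G} (hg : g ∈ H n) (hg' : g' ∈ H n) {x : X}
    (h : ¬ H n ≤ stabilizer G (g • x)) (h' : ¬ H n ≤ stabilizer G (g' • x)) :
    orbitNode H n (g • x) h = orbitNode H n (g' • x) h' :=
  Subtype.ext <| Prod.ext rfl <|
    (setOf_orbitSeqRel_smul hg x).trans (setOf_orbitSeqRel_smul hg' x).symm

lemma orbitNode_lt_orbitNode_succ (hH : Antitone H) {n : ℕ} {x : X}
    (h : ¬ H n ≤ stabilizer G x) (h' : ¬ H (n + 1) ≤ stabilizer G x) :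
    nodeLT (orbitSeqRel H X) (orbitNode H n x h) (orbitNode H (n + 1) x h') :=
  ⟨n.lt_succ_self, fun _ ⟨g, hg, hy⟩ => ⟨g, hH n.le_succ hg, hy⟩⟩

namespace TreeNode

lemma not_le_stabilizer (p : TreeNode X (orbitSeqRel H X)) :
    ¬ H p.1.1 ≤ stabilizer G p.basepoint := by
  rw [← setOf_orbitSeqRel_eq_singleton_iff, ← p.carrier_eq_setOf]
  exact p.carrier_ne_singleton

lemma exists_basepoint_eq_smul {p q : TreeNode X (orbitSeqRel H X)}
    (h : nodeLT (orbitSeqRel H X) p q) : ∃ g ∈ H p.1.1, q.basepoint = g • p.basepoint := by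
  have hq : q.basepoint ∈ q.1.2 := by
    rw [q.carrier_eq_setOf]
    exact ⟨1, one_mem _, (one_smul G _).symm⟩
  have hp := h.2 hq
  rwa [p.carrier_eq_setOf] at hp

end TreeNode

theorem treeRho_orbitSeqRel_le (hH : Antitone H) (M : X → ℕ) (hM : ∀ (g : G) x, M (g • x) = M x)
    (hstab : ∀ x, H (M x) ≤ stabilizer G x) {c : Ordinal.{u}} (hc : ∀ x, (M x : Ordinal) ≤ c) :
    treeRho X (orbitSeqRel H X) ≤ c := by
  have hlevel (p : TreeNode X (orbitSeqRel H X)) : p.1.1 < M p.basepoint :=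
    not_le.mp fun h => p.not_le_stabilizer ((hH h).trans (hstab _))
  refine rhoRel_le_of_strictAnti (fun p => ((M p.basepoint - (p.1.1 + 1) : ℕ) : Ordinal))
    (fun p q hpq => ?_) (fun p => ?_)
  · obtain ⟨g, -, hg⟩ := TreeNode.exists_basepoint_eq_smul hpq
    have hq := hlevel q
    have hpq' : p.1.1 < q.1.1 := hpq.1
    rw [hg, hM] at hq ⊢
    exact_mod_cast (by omega : M p.basepoint - (q.1.1 + 1) < M p.basepoint - (p.1.1 + 1))
  · have hp := hlevel p
    exact (Nat.cast_lt.2 (by omega : M p.basepoint - (p.1.1 + 1) < M p.basepoint)).trans_le (hc _)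

theorem nat_le_rank_orbitNode (hwf : TreeWF X (orbitSeqRel H X)) (hH : Antitone H) {x : X} :
    ∀ (N n : ℕ) (hx : ¬ H (n + N) ≤ stabilizer G x),
      (N : Ordinal) ≤ (hwf.apply (orbitNode H n x (mt (hH (n.le_add_right N)).trans hx))).rank
  | 0, _, _ => by simp
  | N + 1, n, hx => by
    have hx' : ¬ H (n + 1 + N) ≤ stabilizer G x := by rwa [Nat.add_right_comm, Nat.add_assoc]
    rw [Nat.cast_succ, ← Order.succ_eq_add_one, Order.succ_le_iff]
    exact (nat_le_rank_orbitNode hwf hH N (n + 1) hx').trans_lt <|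
      Acc.rank_lt_of_rel (r := Function.swap (nodeLT _)) (hwf.apply _)
        (orbitNode_lt_orbitNode_succ hH _ _)

theorem nat_lt_treeRho_orbitSeqRel (hwf : TreeWF X (orbitSeqRel H X)) (hH : Antitone H) {N : ℕ}
    {x : X} (hx : ¬ H N ≤ stabilizer G x) : (N : Ordinal) < treeRho X (orbitSeqRel H X) :=
  (nat_le_rank_orbitNode hwf hH N 0 (by rwa [zero_add])).trans_lt (rank_lt_rhoRel hwf _)

theorem omega0_lt_treeRho_orbitSeqRel (hwf : TreeWF X (orbitSeqRel H X)) (hH : Antitone H)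
    {x : X} (hx : ∀ N, ∃ g ∈ H 0, ¬ H N ≤ stabilizer G (g • x)) :
    Ordinal.omega0 < treeRho X (orbitSeqRel H X) := by
  obtain ⟨g₀, hg₀, hx₀⟩ := hx 0
  refine lt_of_le_of_lt (Ordinal.omega0_le.2 fun N => ?_)
    (rank_lt_rhoRel hwf (orbitNode H 0 _ hx₀))
  obtain ⟨g, hg, hgx⟩ := hx N
  rw [← orbitNode_smul_eq_orbitNode_smul hg hg₀ (mt (hH N.zero_le).trans hgx) hx₀]
  exact nat_le_rank_orbitNode hwf hH N 0 (by rwa [zero_add])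

end OrbitTree

section CLI

variable {G : Type*} [Group G] [TopologicalSpace G]

theorem IsCLI.exists_tendsto [IsTopologicalGroup G] (hcli : IsCLI G) {u : ℕ → G}
    (hu : ∀ U ∈ 𝓝 (1 : G), ∃ N, ∀ i ≥ N, ∀ j ≥ N, u i * (u j)⁻¹ ∈ U) :
    ∃ a, Tendsto u atTop (𝓝 a) := by
  obtain ⟨m, rfl, hcomp, hinv⟩ := hcli
  let := m
  have hcauchy : CauchySeq fun i => (u i)⁻¹ := Metric.cauchySeq_iff.2 fun ε hε => by
    obtain ⟨N, hN⟩ := hu _ (Metric.ball_mem_nhds 1 hε)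
    refine ⟨N, fun i hi j hj => ?_⟩
    rw [← hinv (u i), mul_inv_cancel, dist_comm]
    exact hN i hi j hj
  obtain ⟨c, hc⟩ := cauchySeq_tendsto_of_complete hcauchy
  exact ⟨c⁻¹, by simpa using hc.inv⟩

end CLI

section OrbitTreeWF

variable {G : Type*} {X : Type u} [Group G] [MulAction G X] {H : ℕ → Subgroup G}

lemma exists_smul_eq_of_forall_succ (hH : Antitone H) {n : ℕ → ℕ} (hn : Monotone n) {x : ℕ → X}
    (hx : ∀ i, ∃ g ∈ H (n i), x (i + 1) = g • x i) :
    ∃ u : ℕ → G, (∀ i, x i = u i • x 0) ∧ ∀ i j, i ≤ j → u j * (u i)⁻¹ ∈ H (n i) := by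
  choose g hg hgx using hx
  let u : ℕ → G := fun i => Nat.rec 1 (fun i ui => g i * ui) i
  refine ⟨u, fun i => ?_, fun i j hij => ?_⟩
  · induction i with
    | zero => exact (one_smul G _).symm
    | succ i ih => rw [hgx i, ih, ← mul_smul]
  · induction j, hij using Nat.le_induction with
    | base => rw [mul_inv_cancel]; exact one_mem _
    | succ j hij ih =>
      change g j * u j * (u i)⁻¹ ∈ _
      rw [mul_assoc]
      exact mul_mem (hH (hn hij) (hg j)) ih

lemma Filter.Tendsto.eventually_smul_eq [TopologicalSpace G] [IsTopologicalGroup G] {ι : Type*}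
    {l : Filter ι} {u : ι → G} {a : G} (hu : Tendsto u l (𝓝 a)) {x : X}
    (hstab : IsOpen (stabilizer G (a • x) : Set G)) : ∀ᶠ i in l, u i • x = a • x := by
  have hopen : IsOpen ((· * a⁻¹) ⁻¹' (stabilizer G (a • x) : Set G)) :=
    hstab.preimage (continuous_mul_const a⁻¹)
  filter_upwards [hu (hopen.mem_nhds (by simp [one_mem]))] with i hi
  have hi : (u i * a⁻¹) • a • x = a • x := hi
  rwa [mul_smul, inv_smul_smul] at hi

-- Along an infinite branch with base points `x_i = u_i • x_0`, the `u_i` converge to some `a`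
-- by completeness, so `x_i = a • x_0` eventually, and the orbit of `x_i` at level `n_i` is a
-- singleton as soon as `H n_i` fixes `a • x_0`.
theorem treeWF_orbitSeqRel [TopologicalSpace G] [IsTopologicalGroup G] (hcli : IsCLI G)
    (hH : Antitone H) (hbasis : ∀ U ∈ 𝓝 (1 : G), ∃ n, (H n : Set G) ⊆ U)
    (hstab : ∀ x : X, IsOpen (stabilizer G x : Set G)) : TreeWF X (orbitSeqRel H X) := by
  refine wellFounded_iff_isEmpty_descending_chain.2 ⟨fun ⟨p, hp⟩ => ?_⟩
  have hn : StrictMono fun i => (p i).1.1 := strictMono_nat_of_lt_succ fun i => (hp i).1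
  obtain ⟨u, hux, hu⟩ := exists_smul_eq_of_forall_succ (x := fun i => (p i).basepoint) hH
    hn.monotone fun i => TreeNode.exists_basepoint_eq_smul (hp i)
  have hcauchy (U) (hU : U ∈ 𝓝 (1 : G)) : ∃ N, ∀ i ≥ N, ∀ j ≥ N, u i * (u j)⁻¹ ∈ U := by
    obtain ⟨N, hN⟩ := hbasis U hU
    refine ⟨N, fun i hi j hj => hN ?_⟩
    rcases le_total i j with hij | hji
    · simpa using hH (hi.trans (hn.id_le i)) (inv_mem (hu i j hij))
    · exact hH (hj.trans (hn.id_le j)) (hu j i hji)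
  obtain ⟨a, ha⟩ := hcli.exists_tendsto hcauchy
  obtain ⟨I, hI⟩ := eventually_atTop.1 (ha.eventually_smul_eq (hstab (a • (p 0).basepoint)))
  obtain ⟨M, hM⟩ := hbasis _ ((hstab (a • (p 0).basepoint)).mem_nhds (one_mem _))
  refine (p (max I M)).not_le_stabilizer ?_
  rw [hux, hI _ (le_max_left I M)]
  exact (hH ((le_max_right I M).trans (hn.id_le _))).trans hM

end OrbitTreeWF

lemma MulAction.stabilizer_sigmaMk {M ι : Type*} [Group M] {α : ι → Type*}
    [∀ i, MulAction M (α i)] (i : ι) (b : α i) :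
    stabilizer M (⟨i, b⟩ : Σ i, α i) = stabilizer M b := by
  ext g
  simp [mem_stabilizer_iff]

lemma Subgroup.le_normalCore_iff_forall_le_stabilizer {G : Type*} [Group G] {K L : Subgroup G} :
    L ≤ K.normalCore ↔ ∀ z : G ⧸ K, L ≤ stabilizer G z := by
  simp only [Subgroup.normalCore_eq_ker, SetLike.le_def, MonoidHom.mem_ker, Equiv.Perm.ext_iff,
    MulAction.toPermHom_apply, MulAction.toPerm_apply, Equiv.Perm.coe_one, id_eq,
    mem_stabilizer_iff]
  exact ⟨fun h z _ hg => h hg z, fun h _ hg z => h z hg⟩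

/-! ### The trees of a sequence in `dgnb(G)` -/

-- `rhoDgnb 𝒢` is definitionally `treeRho X (orbitSeqRel 𝒢.seq X)` for the action `Sigma.smul`
-- of `G` on `X = Σ k, G ⧸ 𝒢.seq k`, so the results on orbit trees apply to it as they stand.
namespace Dgnb

variable {G : Type*} [Group G] [TopologicalSpace G] (𝒢 : Dgnb G)

lemma antitone_seq : Antitone 𝒢.seq :=
  antitone_nat_of_succ_le 𝒢.antitone

lemma hasBasis_nhds_one : (𝓝 (1 : G)).HasBasis (fun _ => True) fun n => (𝒢.seq n : Set G) :=
  ⟨fun U => ⟨fun hU => (𝒢.basis U hU).imp fun _ hn => ⟨trivial, hn⟩,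
    fun ⟨n, _, hn⟩ => mem_of_superset ((𝒢.isOpen n).mem_nhds (one_mem _)) hn⟩⟩

lemma exists_notMem_seq [T1Space G] {g : G} (hg : g ≠ 1) : ∃ k, g ∉ 𝒢.seq k :=
  (𝒢.basis _ (compl_singleton_mem_nhds hg.symm)).imp fun _ hk hg' => hk hg' rfl

theorem treeWF [IsTopologicalGroup G] (hcli : IsCLI G) :
    TreeWF (Σ k, G ⧸ 𝒢.seq k) (orbitSeqRel 𝒢.seq _) := by
  refine treeWF_orbitSeqRel hcli 𝒢.antitone_seq 𝒢.basis fun ⟨k, z⟩ => ?_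
  have := QuotientGroup.discreteTopology (𝒢.isOpen k)
  rw [stabilizer_sigmaMk]
  exact stabilizer_isOpen G z

theorem rhoDgnb_le_of_forall_mem_seq_eq_one {N : ℕ} (hN : ∀ g ∈ 𝒢.seq N, g = 1) :
    rhoDgnb 𝒢 ≤ N :=
  treeRho_orbitSeqRel_le 𝒢.antitone_seq (fun _ => N) (fun _ _ => rfl)
    (fun _ g hg => by simp [hN g hg]) fun _ => le_rfl

theorem rhoDgnb_le_omega0_of_le_normalCore (h : ∀ k, ∃ m, 𝒢.seq m ≤ (𝒢.seq k).normalCore) :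
    rhoDgnb 𝒢 ≤ Ordinal.omega0 := by
  choose m hm using h
  refine treeRho_orbitSeqRel_le 𝒢.antitone_seq (fun x => m x.1) (fun _ _ => rfl)
    (fun ⟨k, z⟩ => ?_) fun _ => (Ordinal.natCast_lt_omega0 _).le
  rw [stabilizer_sigmaMk]
  exact Subgroup.le_normalCore_iff_forall_le_stabilizer.1 (hm k) z

theorem nat_lt_rhoDgnb [IsTopologicalGroup G] [T1Space G] (hcli : IsCLI G) {N : ℕ} {g : G}
    (hg : g ∈ 𝒢.seq N) (hg1 : g ≠ 1) : (N : Ordinal) < rhoDgnb 𝒢 := by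
  obtain ⟨k, hk⟩ := 𝒢.exists_notMem_seq hg1
  refine nat_lt_treeRho_orbitSeqRel (𝒢.treeWF hcli) 𝒢.antitone_seq
    (x := ⟨k, ((1 : G) : G ⧸ 𝒢.seq k)⟩) fun hle => hk ?_
  rw [stabilizer_sigmaMk, stabilizer_quotient] at hle
  exact hle hg

theorem exists_le_normalCore_of_rhoDgnb_le_omega0 [IsTopologicalGroup G] (hcli : IsCLI G)
    (h : rhoDgnb 𝒢 ≤ Ordinal.omega0) (k : ℕ) : ∃ m, 𝒢.seq m ≤ (𝒢.seq k).normalCore := by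
  by_contra! hk
  refine (omega0_lt_treeRho_orbitSeqRel (𝒢.treeWF hcli) 𝒢.antitone_seq
    (x := ⟨k, ((1 : G) : G ⧸ 𝒢.seq k)⟩) fun N => ?_).not_ge h
  obtain ⟨z, hz⟩ := not_forall.1 (mt Subgroup.le_normalCore_iff_forall_le_stabilizer.2 (hk N))
  obtain ⟨g, rfl⟩ := QuotientGroup.mk_surjective z
  refine ⟨g, by simp [𝒢.zero_eq_top], ?_⟩
  rwa [Sigma.smul_mk, stabilizer_sigmaMk, MulAction.Quotient.smul_mk, smul_eq_mul, mul_one]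

end Dgnb

/-! ### Two-sided invariant metrics -/

lemma uniformity_eq_comap_inv_mul_nhds_one_of_dist_mul_left {G : Type*} [Group G]
    [PseudoMetricSpace G] (h : ∀ g x y : G, dist (g * x) (g * y) = dist x y) :
    𝓤 G = comap (fun p : G × G => p.1⁻¹ * p.2) (𝓝 1) := by
  refine Metric.uniformity_basis_dist.eq_of_same_basis
    ((Metric.nhds_basis_ball.comap _).congr (fun _ => Iff.rfl) fun ε _ => ?_)
  ext p
  simp [dist_comm, ← h p.1⁻¹ p.1 p.2]

lemma PseudoMetricSpace.toUniformSpace_eq_of_dist_mul_left {G : Type*} [Group G]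
    {m₁ m₂ : PseudoMetricSpace G}
    (ht : m₁.toUniformSpace.toTopologicalSpace = m₂.toUniformSpace.toTopologicalSpace)
    (h₁ : ∀ g x y : G, m₁.dist (g * x) (g * y) = m₁.dist x y)
    (h₂ : ∀ g x y : G, m₂.dist (g * x) (g * y) = m₂.dist x y) :
    m₁.toUniformSpace = m₂.toUniformSpace :=
  UniformSpace.ext <| by
    rw [@uniformity_eq_comap_inv_mul_nhds_one_of_dist_mul_left G _ m₁ h₁,
      @uniformity_eq_comap_inv_mul_nhds_one_of_dist_mul_left G _ m₂ h₂, ht]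

namespace Dgnb

variable {G : Type*} [Group G] [TopologicalSpace G] (𝒢 : Dgnb G)

open scoped Classical in
def seqNorm (x : G) : ℝ :=
  if h : ∃ n, x ∉ 𝒢.seq n then (1 / 2) ^ Nat.find h else 0

lemma seqNorm_nonneg (x : G) : 0 ≤ 𝒢.seqNorm x := by
  unfold seqNorm
  split_ifs <;> positivity

lemma seqNorm_lt_iff {x : G} {n : ℕ} : 𝒢.seqNorm x < (1 / 2) ^ n ↔ x ∈ 𝒢.seq n := by
  classical
  unfold seqNorm
  split_ifs with h
  · rw [pow_lt_pow_iff_right_of_lt_one₀ (by norm_num) (by norm_num)]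
    refine ⟨fun hn => ?_, fun hx => ?_⟩
    · by_contra hx
      exact (Nat.find_min' h hx).not_gt hn
    · by_contra hn
      exact Nat.find_spec h (𝒢.antitone_seq (not_lt.1 hn) hx)
  · push Not at h
    simp [h n]

lemma pow_le_seqNorm {x : G} {n : ℕ} (h : x ∉ 𝒢.seq n) : (1 / 2) ^ n ≤ 𝒢.seqNorm x :=
  not_lt.1 (mt 𝒢.seqNorm_lt_iff.1 h)

lemma seqNorm_le_of_forall_notMem {x : G} {r : ℝ} (hr : 0 ≤ r)
    (h : ∀ n, x ∉ 𝒢.seq n → (1 / 2) ^ n ≤ r) : 𝒢.seqNorm x ≤ r := by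
  classical
  unfold seqNorm
  split_ifs with hx
  · exact h _ (Nat.find_spec hx)
  · exact hr

lemma seqNorm_le_seqNorm {x y : G} (h : ∀ n, y ∈ 𝒢.seq n → x ∈ 𝒢.seq n) :
    𝒢.seqNorm x ≤ 𝒢.seqNorm y :=
  𝒢.seqNorm_le_of_forall_notMem (𝒢.seqNorm_nonneg y) fun n hx => 𝒢.pow_le_seqNorm (mt (h n) hx)

lemma seqNorm_mul_le (x y : G) : 𝒢.seqNorm (x * y) ≤ max (𝒢.seqNorm x) (𝒢.seqNorm y) :=
  𝒢.seqNorm_le_of_forall_notMem ((𝒢.seqNorm_nonneg x).trans (le_max_left _ _)) fun n hxy => by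
    by_cases hx : x ∈ 𝒢.seq n
    · exact le_max_of_le_right (𝒢.pow_le_seqNorm fun hy => hxy (mul_mem hx hy))
    · exact le_max_of_le_left (𝒢.pow_le_seqNorm hx)

lemma seqNorm_inv (x : G) : 𝒢.seqNorm x⁻¹ = 𝒢.seqNorm x :=
  le_antisymm (𝒢.seqNorm_le_seqNorm fun _ => inv_mem)
    (𝒢.seqNorm_le_seqNorm fun _ => inv_mem_iff.1)

lemma seqNorm_one : 𝒢.seqNorm 1 = 0 :=
  le_antisymm (𝒢.seqNorm_le_of_forall_notMem le_rfl fun _ h => absurd (one_mem _) h)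
    (𝒢.seqNorm_nonneg 1)

lemma eq_one_of_seqNorm_eq_zero [T1Space G] {x : G} (hx : 𝒢.seqNorm x = 0) : x = 1 := by
  by_contra h
  obtain ⟨k, hk⟩ := 𝒢.exists_notMem_seq h
  have := 𝒢.pow_le_seqNorm hk
  rw [hx] at this
  exact this.not_gt (by positivity)

lemma seqNorm_conj (hN : ∀ n, (𝒢.seq n).Normal) (g x : G) :
    𝒢.seqNorm (g * x * g⁻¹) = 𝒢.seqNorm x :=
  le_antisymm (𝒢.seqNorm_le_seqNorm fun n h => (hN n).conj_mem x h g)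
    (𝒢.seqNorm_le_seqNorm fun n h => by simpa [mul_assoc] using (hN n).conj_mem _ h g⁻¹)

def groupNorm [T1Space G] : GroupNorm G where
  toFun := 𝒢.seqNorm
  map_one' := 𝒢.seqNorm_one
  mul_le' x y := (𝒢.seqNorm_mul_le x y).trans
    (max_le_add_of_nonneg (𝒢.seqNorm_nonneg x) (𝒢.seqNorm_nonneg y))
  inv' := 𝒢.seqNorm_inv
  eq_one_of_map_eq_zero' _ := 𝒢.eq_one_of_seqNorm_eq_zero

abbrev metricSpace [T1Space G] : MetricSpace G :=
  𝒢.groupNorm.toNormedGroup.toMetricSpace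

lemma metricSpace_dist [T1Space G] (x y : G) :
    𝒢.metricSpace.dist x y = 𝒢.seqNorm (x⁻¹ * y) :=
  rfl

lemma metricSpace_topology [IsTopologicalGroup G] [T1Space G] :
    𝒢.metricSpace.toUniformSpace.toTopologicalSpace = ‹TopologicalSpace G› := by
  refine TopologicalSpace.ext_nhds fun x => ?_
  have hball := @Metric.nhds_basis_ball_pow G 𝒢.metricSpace.toPseudoMetricSpace x (1 / 2)
    (by norm_num) (by norm_num)
  have hcoset := 𝒢.hasBasis_nhds_one.map (x * ·)
  rw [map_mul_left_nhds_one] at hcoset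
  refine hball.eq_of_same_basis (hcoset.congr (fun _ => Iff.rfl) fun n _ => ?_)
  ext y
  rw [Set.image_mul_left, Set.mem_preimage, SetLike.mem_coe, ← 𝒢.seqNorm_lt_iff, ← seqNorm_inv]
  simp [Metric.mem_ball, metricSpace_dist]

theorem isTSI_of_forall_normal [IsTopologicalGroup G] [T1Space G] (hcli : IsCLI G)
    (hN : ∀ n, (𝒢.seq n).Normal) : IsTSI G := by
  obtain ⟨m₀, htop₀, hcomp₀, hinv₀⟩ := hcli
  have hleft (g x y : G) : 𝒢.metricSpace.dist (g * x) (g * y) = 𝒢.metricSpace.dist x y := by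
    rw [metricSpace_dist, metricSpace_dist, mul_inv_rev, mul_assoc, inv_mul_cancel_left]
  refine ⟨𝒢.metricSpace, 𝒢.metricSpace_topology, ?_, fun g x y => ⟨hleft g x y, ?_⟩⟩
  · rwa [PseudoMetricSpace.toUniformSpace_eq_of_dist_mul_left
      (𝒢.metricSpace_topology.trans htop₀.symm) hleft hinv₀]
  · rw [metricSpace_dist, metricSpace_dist, ← 𝒢.seqNorm_conj hN g⁻¹ (x⁻¹ * y)]
    simp [mul_assoc]

end Dgnb

theorem IsNonArch.nonempty_dgnb {G : Type*} [Group G] [TopologicalSpace G]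
    [IsTopologicalGroup G] [FirstCountableTopology G] (hna : IsNonArch G) : Nonempty (Dgnb G) := by
  obtain ⟨u, hu⟩ := (𝓝 (1 : G)).exists_antitone_basis
  choose H hHopen hHu using fun n => hna (u n) (hu.mem n)
  let V (n : ℕ) : OpenSubgroup G := (Finset.range n).inf fun i => ⟨H i, hHopen i⟩
  refine ⟨⟨fun n => V n, fun n => (V n).isOpen, fun n => ?_, OpenSubgroup.toSubgroup_top, ?_⟩⟩
  · exact OpenSubgroup.toSubgroup_le.2 (Finset.inf_mono (Finset.range_subset_range.2 n.le_succ))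
  · intro U hU
    obtain ⟨n, -, hn⟩ := hu.toHasBasis.mem_iff.1 hU
    refine ⟨n + 1, fun g hg => hn (hHu n ?_)⟩
    exact (Finset.inf_le (f := fun i => (⟨H i, hHopen i⟩ : OpenSubgroup G))
      (Finset.self_mem_range_succ n) : V (n + 1) ≤ ⟨H n, hHopen n⟩) hg

namespace Dgnb

variable {G : Type*} [Group G] [TopologicalSpace G] [IsTopologicalGroup G]

def normalCores (𝒢 : Dgnb G) (h : ∀ k, ∃ m, 𝒢.seq m ≤ (𝒢.seq k).normalCore) : Dgnb G where
  seq n := (𝒢.seq n).normalCore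
  isOpen n := let ⟨m, hm⟩ := h n; Subgroup.isOpen_mono hm (𝒢.isOpen m)
  antitone n := Subgroup.normalCore_mono (𝒢.antitone n)
  zero_eq_top := by rw [𝒢.zero_eq_top, Subgroup.normalCore_eq_self]
  basis U hU := let ⟨n, hn⟩ := 𝒢.basis U hU; ⟨n, fun _ hg => hn (Subgroup.normalCore_le _ hg)⟩

end Dgnb

theorem IsTSI.exists_le_normalCore {G : Type*} [Group G] [TopologicalSpace G] (htsi : IsTSI G)
    (𝒢 : Dgnb G) (k : ℕ) : ∃ m, 𝒢.seq m ≤ (𝒢.seq k).normalCore := by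
  obtain ⟨m, rfl, -, hinv⟩ := htsi
  let := m
  obtain ⟨ε, hε, hball⟩ := Metric.mem_nhds_iff.1 ((𝒢.isOpen k).mem_nhds (one_mem (𝒢.seq k)))
  obtain ⟨n, hn⟩ := 𝒢.basis _ (Metric.ball_mem_nhds 1 hε)
  refine ⟨n, fun g hg b => hball ?_⟩
  have hconj : dist (b * g * b⁻¹) 1 = dist g 1 :=
    calc dist (b * g * b⁻¹) 1 = dist (b * g * b⁻¹ * b) (1 * b) := (hinv b _ _).2.symm
      _ = dist (b * g) (b * 1) := by rw [inv_mul_cancel_right, one_mul, mul_one]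
      _ = dist g 1 := (hinv b g 1).1
  exact hconj.trans_lt (hn hg)

lemma omegaPart_eq_zero {a : Ordinal} (h : a < Ordinal.omega0) : omegaPart a = 0 := by
  refine le_antisymm (csSup_le ⟨0, Or.inl rfl, zero_le⟩ ?_) zero_le
  rintro b ⟨rfl | hb, hba⟩
  · exact le_rfl
  · exact absurd (hba.trans_lt h) (Ordinal.omega0_le_of_isSuccLimit hb).not_gt

lemma omega0_le_omegaPart {a : Ordinal} (h : Ordinal.omega0 ≤ a) :
    Ordinal.omega0 ≤ omegaPart a :=
  le_csSup ⟨a, fun _ hb => hb.2⟩ ⟨Or.inr Ordinal.isSuccLimit_omega0, h⟩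

theorem isAlphaCLI_zero_iff {G : Type*} [Group G] [TopologicalSpace G] [IsTopologicalGroup G]
    [T1Space G] (hcli : IsCLI G) (𝒢 : Dgnb G) : IsAlphaCLI G 0 ↔ ∀ g : G, g = 1 := by
  refine ⟨fun h0 g => ?_, fun htriv 𝒢' => ?_⟩
  · by_contra hg
    have hg0 : g ∈ 𝒢.seq 0 := by simp [𝒢.zero_eq_top]
    simpa using (𝒢.nat_lt_rhoDgnb hcli hg0 hg).trans_le (h0 𝒢)
  · simpa using 𝒢'.rhoDgnb_le_of_forall_mem_seq_eq_one (N := 0) fun g _ => htriv g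

theorem isLAlphaCLI_zero_iff {G : Type*} [Group G] [TopologicalSpace G] [IsTopologicalGroup G]
    [T1Space G] (hcli : IsCLI G) (𝒢 : Dgnb G) : IsLAlphaCLI G 0 ↔ DiscreteTopology G := by
  refine ⟨fun hL => ?_, fun hdisc 𝒢' => ?_⟩
  · by_contra hnd
    have hnontriv (N : ℕ) : ∃ g ∈ 𝒢.seq N, g ≠ 1 := by
      by_contra! h
      refine hnd (discreteTopology_iff_isOpen_singleton_one.2 ?_)
      simpa [(Subgroup.eq_bot_iff_forall _).2 h] using 𝒢.isOpen N
    have hω : Ordinal.omega0 ≤ rhoDgnb 𝒢 := Ordinal.omega0_le.2 fun N =>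
      let ⟨_, hg, hg1⟩ := hnontriv N
      (𝒢.nat_lt_rhoDgnb hcli hg hg1).le
    exact (omega0_le_omegaPart hω).not_gt ((hL 𝒢).trans_lt (by simp [Ordinal.omega0_pos]))
  · obtain ⟨N, hN⟩ := 𝒢'.basis {1} (isOpen_discrete _ |>.mem_nhds rfl)
    have hρ := 𝒢'.rhoDgnb_le_of_forall_mem_seq_eq_one (N := N) fun _ hg => hN hg
    simp [omegaPart_eq_zero (hρ.trans_lt (Ordinal.natCast_lt_omega0 N))]

theorem isAlphaCLI_one_iff {G : Type*} [Group G] [TopologicalSpace G] [IsTopologicalGroup G]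
    [T1Space G] (hcli : IsCLI G) (𝒢 : Dgnb G) : IsAlphaCLI G 1 ↔ IsTSI G := by
  refine ⟨fun h1 => ?_, fun htsi 𝒢' => ?_⟩
  · have hcore := 𝒢.exists_le_normalCore_of_rhoDgnb_le_omega0 hcli (by simpa using h1 𝒢)
    exact (𝒢.normalCores hcore).isTSI_of_forall_normal hcli fun _ => Subgroup.normalCore_normal _
  · simpa using 𝒢'.rhoDgnb_le_omega0_of_le_normalCore (htsi.exists_le_normalCore 𝒢')

theorem statement_0 (G : Type) [Group G] [TopologicalSpace G] [IsTopologicalGroup G]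
    [PolishSpace G] (hna : IsNonArch G) (hcli : IsCLI G) :
    (IsAlphaCLI G 0 ↔ ∀ g : G, g = 1) ∧
    (IsLAlphaCLI G 0 ↔ DiscreteTopology G) ∧
    (IsAlphaCLI G 1 ↔ IsTSI G) := by
  obtain ⟨𝒢⟩ := hna.nonempty_dgnb
  exact ⟨isAlphaCLI_zero_iff hcli 𝒢, isLAlphaCLI_zero_iff hcli 𝒢, isAlphaCLI_one_iff hcli 𝒢⟩
end
end

section
/- Let G be a non-archimedean CLI Polish group, X a countable discrete Polish G-space, and 𝒢 = (G_n) ∈ dgnb(G). Then the tree T_𝒢^X is well-founded. -/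
noncomputable section

/-! An infinite branch `(n_k, C_k)` of the tree yields points `a_k` with `C_k = G_{n_k} a_k` and
`a_{k+1} = g_k a_k` for some `g_k ∈ G_{n_k}`. For a complete left-invariant metric the inverses of
the products `g_{k-1} ⋯ g_0` form a Cauchy sequence, since `g_{j-1} ⋯ g_i ∈ G_{n_i}`; so these
products converge and, `X` being discrete, `a_k = g_{k-1} ⋯ g_0 a_0` is eventually a constant `y`.
The stabiliser of `y` is open and hence contains `G_{n_k}` for large `k`, which makes
`C_k = G_{n_k} y` a singleton. -/

open Filter Topology

theorem subOrbit_self {G X : Type*} [Group G] [MulAction G X] (H : Subgroup G) (x : X) :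
    subOrbit H X x x :=
  ⟨1, one_mem H, one_smul G x⟩

theorem subOrbit_eq_singleton_of_le_stabilizer {G X : Type*} [Group G] [MulAction G X]
    {H : Subgroup G} {x : X} (hx : H ≤ MulAction.stabilizer G x) :
    {z | subOrbit H X x z} = {x} := by
  ext z
  constructor
  · rintro ⟨g, hg, rfl⟩
    exact MulAction.mem_stabilizer_iff.mp (hx hg)
  · rintro rfl
    exact subOrbit_self H z

theorem Dgnb.antitone_seq_s12 {G : Type*} [Group G] [TopologicalSpace G] (𝒢 : Dgnb G) :
    Antitone 𝒢.seq :=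
  antitone_nat_of_succ_le 𝒢.antitone

def leftPartialProd {M : Type*} [Monoid M] (g : ℕ → M) : ℕ → M
  | 0 => 1
  | k + 1 => g k * leftPartialProd g k

theorem leftPartialProd_smul {M X : Type*} [Monoid M] [MulAction M X] {g : ℕ → M} {a : ℕ → X}
    (ha : ∀ k, g k • a k = a (k + 1)) (k : ℕ) : leftPartialProd g k • a 0 = a k := by
  induction k with
  | zero => exact one_smul M (a 0)
  | succ k ih => rw [leftPartialProd, mul_smul, ih, ha]

theorem leftPartialProd_mul_inv_mem {G : Type*} [Group G] {H : ℕ → Subgroup G} (hH : Antitone H)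
    {g : ℕ → G} (hg : ∀ k, g k ∈ H k) {i j : ℕ} (hij : i ≤ j) :
    leftPartialProd g j * (leftPartialProd g i)⁻¹ ∈ H i := by
  induction j, hij using Nat.le_induction with
  | base => rw [mul_inv_cancel]; exact one_mem (H i)
  | succ j hij ih =>
    rw [leftPartialProd, mul_assoc]
    exact mul_mem (hH hij (hg j)) ih

theorem cauchySeq_of_inv_mul_mem_nhds {G : Type*} [Group G] [PseudoMetricSpace G]
    (hli : ∀ g h k : G, dist (g * h) (g * k) = dist h k) {P : ℕ → G}
    (hP : ∀ U ∈ 𝓝 (1 : G), ∃ N, ∀ n ≥ N, (P N)⁻¹ * P n ∈ U) : CauchySeq P := by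
  rw [Metric.cauchySeq_iff']
  intro ε hε
  obtain ⟨N, hN⟩ := hP (Metric.ball 1 ε) (Metric.ball_mem_nhds 1 hε)
  refine ⟨N, fun n hn => ?_⟩
  calc dist (P n) (P N) = dist ((P N)⁻¹ * P n) ((P N)⁻¹ * P N) := (hli _ _ _).symm
    _ = dist ((P N)⁻¹ * P n) 1 := by rw [inv_mul_cancel]
    _ < ε := hN n hn

theorem exists_tendsto_leftPartialProd {G : Type*} [Group G] [PseudoMetricSpace G] [CompleteSpace G]
    [IsTopologicalGroup G] (hli : ∀ g h k : G, dist (g * h) (g * k) = dist h k)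
    {H : ℕ → Subgroup G} (hH : Antitone H) (hbasis : ∀ U ∈ 𝓝 (1 : G), ∃ k, (H k : Set G) ⊆ U)
    {g : ℕ → G} (hg : ∀ k, g k ∈ H k) :
    ∃ f, Tendsto (leftPartialProd g) atTop (𝓝 f) := by
  have hcauchy : CauchySeq fun k => (leftPartialProd g k)⁻¹ := by
    refine cauchySeq_of_inv_mul_mem_nhds hli fun U hU => ?_
    obtain ⟨N, hN⟩ := hbasis U hU
    refine ⟨N, fun n hn => hN ?_⟩
    simpa only [mul_inv_rev, inv_inv, SetLike.mem_coe] using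
      inv_mem (leftPartialProd_mul_inv_mem hH hg hn)
  obtain ⟨f, hf⟩ := cauchySeq_tendsto_of_complete hcauchy
  exact ⟨f⁻¹, by simpa using hf.inv⟩

theorem eventually_smul_eq_of_tendsto {G X : Type*} [Group G] [TopologicalSpace G]
    [TopologicalSpace X] [DiscreteTopology X] [MulAction G X] [ContinuousSMul G X] {ι : Type*}
    {l : Filter ι} {F : ι → G} {f : G} (hF : Tendsto F l (𝓝 f)) (x : X) :
    ∀ᶠ i in l, F i • x = f • x := by
  simpa only [nhds_discrete, tendsto_pure] using hF.smul_const x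

theorem exists_le_stabilizer {G X : Type*} [Group G] [TopologicalSpace G]
    [TopologicalSpace X] [DiscreteTopology X] [MulAction G X] [ContinuousSMul G X]
    {H : ℕ → Subgroup G} (hbasis : ∀ U ∈ 𝓝 (1 : G), ∃ k, (H k : Set G) ⊆ U) (x : X) :
    ∃ k, H k ≤ MulAction.stabilizer G x :=
  hbasis _ ((stabilizer_isOpen G x).mem_nhds (one_mem _))

theorem exists_subOrbit_eq_singleton {G X : Type*} [Group G] [PseudoMetricSpace G] [CompleteSpace G]
    [IsTopologicalGroup G] (hli : ∀ g h k : G, dist (g * h) (g * k) = dist h k)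
    [TopologicalSpace X] [DiscreteTopology X] [MulAction G X] [ContinuousSMul G X]
    {H : ℕ → Subgroup G} (hH : Antitone H) (hbasis : ∀ U ∈ 𝓝 (1 : G), ∃ k, (H k : Set G) ⊆ U)
    {a : ℕ → X} (ha : ∀ k, subOrbit (H k) X (a k) (a (k + 1))) :
    ∃ k, {z | subOrbit (H k) X (a k) z} = {a k} := by
  choose g hgH hga using ha
  obtain ⟨f, hf⟩ := exists_tendsto_leftPartialProd hli hH hbasis hgH
  obtain ⟨K, hK⟩ := eventually_atTop.mp (eventually_smul_eq_of_tendsto hf (a 0))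
  obtain ⟨m, hm⟩ := exists_le_stabilizer hbasis (f • a 0)
  refine ⟨max K m, subOrbit_eq_singleton_of_le_stabilizer ?_⟩
  rw [← leftPartialProd_smul hga, hK _ (le_max_left K m)]
  exact (hH (le_max_right K m)).trans hm

theorem statement_12_general (G : Type) [Group G] [TopologicalSpace G] [IsTopologicalGroup G]
    (hcli : IsCLI G)
    (X : Type) [TopologicalSpace X] [DiscreteTopology X]
    [MulAction G X] [ContinuousSMul G X] (𝒢 : Dgnb G) :
    TreeWF X (dgnbRel 𝒢 X) := by
  obtain ⟨m, rfl, hcomplete, hli⟩ := hcli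
  let _ : MetricSpace G := m
  rw [TreeWF, wellFounded_iff_isEmpty_descending_chain]
  refine ⟨fun ⟨s, hs⟩ => ?_⟩
  have hn : StrictMono fun k => (s k).1.1 := strictMono_nat_of_lt_succ fun k => (hs k).1
  choose a ha hne using fun k => (s k).2
  have hstep : ∀ k, subOrbit (𝒢.seq (s k).1.1) X (a k) (a (k + 1)) := by
    intro k
    have hmem : a (k + 1) ∈ (s k).1.2 := (hs k).2 (by rw [ha]; exact subOrbit_self _ _)
    rw [ha k] at hmem
    exact hmem
  have hbasis : ∀ U ∈ 𝓝 (1 : G), ∃ k, (𝒢.seq (s k).1.1 : Set G) ⊆ U := fun U hU =>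
    let ⟨k, hk⟩ := 𝒢.basis U hU
    ⟨k, (SetLike.coe_subset_coe.mpr (𝒢.antitone_seq_s12 hn.le_apply)).trans hk⟩
  obtain ⟨k, hk⟩ := exists_subOrbit_eq_singleton hli (𝒢.antitone_seq_s12.comp_monotone hn.monotone)
    hbasis hstep
  exact hne k ((ha k).trans hk)

theorem statement_12 (G : Type) [Group G] [TopologicalSpace G] [IsTopologicalGroup G]
    [PolishSpace G] (hna : IsNonArch G) (hcli : IsCLI G)
    (X : Type) [TopologicalSpace X] [DiscreteTopology X] [Countable X]
    [MulAction G X] [ContinuousSMul G X] (𝒢 : Dgnb G) :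
    TreeWF X (dgnbRel 𝒢 X) :=
  statement_12_general G hcli X 𝒢
end
end

section
/- Let G be a non-archimedean CLI Polish group, X a countable discrete Polish G-space, and let 𝒢 = (G_n), 𝒢' = (G_n') ∈ dgnb(G). Then ω(ρ(T_𝒢^X)) = ω(ρ(T_{𝒢'}^X)). -/
noncomputable section

/-!
Each subgroup of one sequence contains a subgroup of the other, so each orbit relation of one
sequence contains an orbit relation of the other. If a node of `T_𝒢^X` has rank at least `γ + n`,
with `γ` a limit and `n` large, one can descend `n` levels in `T_𝒢^X` keeping rank at least `γ`;
the orbit reached there lies in `𝒢'`-orbits of `k` consecutive levels, which form a chain of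
length `k` in `T_{𝒢'}^X`. By induction on `γ`, every limit below the rank of one tree is below
the rank of the other. The same comparison of orbits turns an infinite branch of one tree into
one of the other, so the two trees are well-founded together.
-/

open Order

universe u

namespace Ordinal

lemma exists_isSuccPrelimit_add_natCast (δ : Ordinal) :
    ∃ γ : Ordinal, ∃ k : ℕ, IsSuccPrelimit γ ∧ γ + k = δ := by
  obtain ⟨k, hk⟩ := lt_omega0.1 (mod_lt δ omega0_ne_zero)
  exact ⟨ω * (δ / ω), k, isSuccPrelimit_iff_omega0_dvd.2 (dvd_mul_right _ _),
    by rw [← hk, div_add_mod]⟩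

lemma le_of_forall_isSuccPrelimit_add_natCast_lt {γ β : Ordinal} (hγ : IsSuccPrelimit γ)
    (h : ∀ γ₀ < γ, IsSuccPrelimit γ₀ → (∀ n : ℕ, γ₀ + n < γ) → ∀ k : ℕ, γ₀ + k < β) :
    γ ≤ β := by
  refine le_of_forall_lt fun δ hδ => ?_
  obtain ⟨γ₀, k, hγ₀, rfl⟩ := exists_isSuccPrelimit_add_natCast δ
  have hγ₀γ : γ₀ < γ := le_self_add.trans_lt hδ
  exact h γ₀ hγ₀γ hγ₀ (hγ.add_natCast_lt hγ₀γ) k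

end Ordinal

lemma omegaPart_le_omegaPart_of_forall_le {a b : Ordinal}
    (h : ∀ γ, IsSuccPrelimit γ → γ ≤ a → γ ≤ b) :
    omegaPart a ≤ omegaPart b :=
  csSup_le ⟨0, Or.inl rfl, zero_le⟩ fun γ ⟨hγ, hγa⟩ =>
    le_csSup ⟨b, fun _ hc => hc.2⟩
      ⟨hγ, h γ (hγ.elim (· ▸ Ordinal.isSuccPrelimit_zero) IsSuccLimit.isSuccPrelimit) hγa⟩

structure IsDecreasingEquivSeq {X : Type*} (E : ℕ → X → X → Prop) : Prop where
  equivalence : ∀ n, Equivalence (E n)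
  antitone : Antitone E

namespace TreeNode

variable {X : Type u} {E E' : ℕ → X → X → Prop}

def level (s : TreeNode X E) : ℕ := s.1.1

def cls (s : TreeNode X E) : Set X := s.1.2

lemma nodeLT_iff {s t : TreeNode X E} : nodeLT E s t ↔ s.level < t.level ∧ t.cls ⊆ s.cls :=
  Iff.rfl

lemma exists_cls_eq (s : TreeNode X E) : ∃ x, s.cls = {y | E s.level x y} ∧ s.cls ≠ {x} :=
  s.2

lemma mem_cls_iff (hE : IsDecreasingEquivSeq E) {s : TreeNode X E} {x z : X} (hx : x ∈ s.cls) :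
    z ∈ s.cls ↔ E s.level x z := by
  obtain ⟨x₀, hs, -⟩ := s.exists_cls_eq
  rw [hs] at hx ⊢
  have h := hE.equivalence s.level
  exact ⟨fun hz => h.trans (h.symm hx) hz, fun hz => h.trans hx hz⟩

lemma nontrivial_cls (hE : IsDecreasingEquivSeq E) (s : TreeNode X E) : s.cls.Nontrivial := by
  obtain ⟨x, hs, hne⟩ := s.exists_cls_eq
  have hx : x ∈ s.cls := hs ▸ (hE.equivalence s.level).refl x
  exact (Set.nontrivial_iff_ne_singleton hx).2 hne

lemma cls_subset_of_mem (hE : IsDecreasingEquivSeq E) {s t : TreeNode X E} {x : X}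
    (hle : s.level ≤ t.level) (hs : x ∈ s.cls) (ht : x ∈ t.cls) : t.cls ⊆ s.cls :=
  fun _ hz => (mem_cls_iff hE hs).2 (hE.antitone hle _ _ ((mem_cls_iff hE ht).1 hz))

lemma eq_of_level_eq_of_cls_subset (hE : IsDecreasingEquivSeq E) {s t : TreeNode X E}
    (hlevel : t.level = s.level) (hsub : t.cls ⊆ s.cls) : t = s := by
  obtain ⟨x, hx⟩ := (nontrivial_cls hE t).nonempty
  exact Subtype.ext (Prod.ext hlevel
    (hsub.antisymm (cls_subset_of_mem hE hlevel.le hx (hsub hx))))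

lemma exists_cls_superset (hE : IsDecreasingEquivSeq E) (s : TreeNode X E) {ℓ : ℕ}
    (h : E s.level ≤ E' ℓ) : ∃ t : TreeNode X E', t.level = ℓ ∧ s.cls ⊆ t.cls := by
  obtain ⟨x, hs, -⟩ := s.exists_cls_eq
  have hsub : s.cls ⊆ {z | E' ℓ x z} := fun z hz => h x z (by rwa [hs] at hz)
  exact ⟨⟨(ℓ, {z | E' ℓ x z}), x, rfl, ((nontrivial_cls hE s).mono hsub).ne_singleton⟩,
    rfl, hsub⟩

end TreeNode

open TreeNode

section Rank

variable {X : Type u} {E E' : ℕ → X → X → Prop}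

/-- An infinite branch of `T_{E'}` yields one of `T_E`, through the `E`-classes containing the
nodes of a subsequence of the branch. -/
lemma TreeWF.of_cofinal (hE : IsDecreasingEquivSeq E) (hE' : IsDecreasingEquivSeq E')
    (hcof : ∀ n, ∃ ℓ, E' ℓ ≤ E n) (hwf : TreeWF X E) : TreeWF X E' := by
  refine wellFounded_iff_isEmpty_descending_chain.2 ⟨fun ⟨f, hf⟩ => ?_⟩
  have hlevel : ∀ i, i ≤ (f i).level :=
    StrictMono.id_le (strictMono_nat_of_lt_succ fun n => (hf n).1)
  have hcls : Antitone fun i => (f i).cls := antitone_nat_of_succ_le fun n => (hf n).2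
  obtain ⟨φ, hφ, hφE⟩ := Filter.extraction_forall_of_eventually'
    (P := fun n k => E' k ≤ E n) fun n =>
      let ⟨ℓ, hℓ⟩ := hcof n
      ⟨ℓ, fun _ hk => (hE'.antitone hk).trans hℓ⟩
  choose s hs_level hs_cls using fun n =>
    exists_cls_superset hE' (f (φ n)) (ℓ := n) ((hE'.antitone (hlevel _)).trans (hφE n))
  refine (wellFounded_iff_isEmpty_descending_chain.1 hwf).elim ⟨s, fun n => ?_⟩
  obtain ⟨x, hx⟩ := (nontrivial_cls hE' (f (φ (n + 1)))).nonempty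
  have hlt : (s n).level < (s (n + 1)).level := by simp only [hs_level, Nat.lt_succ_self]
  exact ⟨hlt, cls_subset_of_mem hE hlt.le
    (hs_cls n (hcls (hφ.monotone n.le_succ) hx)) (hs_cls (n + 1) hx)⟩

def TreeWF.rank (hwf : TreeWF X E) (s : TreeNode X E) : Ordinal.{u} :=
  (hwf.apply s).rank

lemma TreeWF.rank_lt_of_nodeLT (hwf : TreeWF X E) {s t : TreeNode X E} (h : nodeLT E s t) :
    hwf.rank t < hwf.rank s :=
  Acc.rank_lt_of_rel (hwf.apply s) h

lemma TreeWF.exists_nodeLT_of_lt_rank (hwf : TreeWF X E) {s : TreeNode X E} {γ : Ordinal}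
    (h : γ < hwf.rank s) : ∃ t, nodeLT E s t ∧ γ ≤ hwf.rank t := by
  rw [TreeWF.rank, Acc.rank_eq, Ordinal.lt_iSup_iff] at h
  obtain ⟨⟨t, hst⟩, ht⟩ := h
  exact ⟨t, hst, Order.lt_succ_iff.1 ht⟩

lemma treeRho_eq_iSup (hwf : TreeWF X E) : treeRho X E = ⨆ s, succ (hwf.rank s) :=
  dif_pos hwf

lemma treeRho_eq_zero (hwf : ¬ TreeWF X E) : treeRho X E = 0 :=
  dif_neg hwf

lemma TreeWF.exists_cls_subset_of_add_le_rank (hwf : TreeWF X E) (γ : Ordinal) :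
    ∀ (n : ℕ) (s : TreeNode X E), γ + n ≤ hwf.rank s →
      ∃ s', s'.cls ⊆ s.cls ∧ s.level + n ≤ s'.level ∧ γ ≤ hwf.rank s'
  | 0, s, h => ⟨s, subset_rfl, le_rfl, by simpa using h⟩
  | n + 1, s, h => by
    rw [Nat.cast_add_one, ← add_assoc, Order.add_one_le_iff] at h
    obtain ⟨t, hst, ht⟩ := hwf.exists_nodeLT_of_lt_rank h
    obtain ⟨hst_level, hts⟩ := nodeLT_iff.1 hst
    obtain ⟨s', hs't, hlevel, hs'⟩ := hwf.exists_cls_subset_of_add_le_rank γ n t ht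
    exact ⟨s', hs't.trans hts, by omega, hs'⟩

lemma TreeWF.rank_add_le_of_cls_subset (hE : IsDecreasingEquivSeq E) (hwf : TreeWF X E) :
    ∀ (k : ℕ) {s t : TreeNode X E}, t.cls ⊆ s.cls → t.level = s.level + k →
      hwf.rank t + k ≤ hwf.rank s
  | 0, s, t, hsub, hlevel => by
    rw [eq_of_level_eq_of_cls_subset hE hlevel hsub, Nat.cast_zero, add_zero]
  | k + 1, s, t, hsub, hlevel => by
    obtain ⟨u, hu_level, htu⟩ :=
      exists_cls_superset hE t (ℓ := s.level + 1) (hE.antitone (by omega))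
    obtain ⟨x, hx⟩ := (nontrivial_cls hE t).nonempty
    have hsu : nodeLT E s u :=
      nodeLT_iff.2 ⟨by omega, cls_subset_of_mem hE (by omega) (hsub hx) (htu hx)⟩
    calc hwf.rank t + ↑(k + 1) = hwf.rank t + k + 1 := by rw [Nat.cast_add_one, add_assoc]
      _ ≤ hwf.rank u + 1 :=
        add_le_add_left (hwf.rank_add_le_of_cls_subset hE k htu (by omega)) 1
      _ ≤ hwf.rank s := Order.add_one_le_iff.2 (hwf.rank_lt_of_nodeLT hsu)

/-- Descend `n` levels below `s` in `T_E`, where `E n ≤ E' (t.level + k)`; the class reached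
there sits in a class of level `t.level + k` below `t` in `T_{E'}`. -/
lemma add_le_rank_of_cls_subset (hE : IsDecreasingEquivSeq E) (hE' : IsDecreasingEquivSeq E')
    (hwf : TreeWF X E) (hwf' : TreeWF X E') {γ : Ordinal}
    (hγ : ∀ (s : TreeNode X E) (t : TreeNode X E'), s.cls ⊆ t.cls →
      γ ≤ hwf.rank s → γ ≤ hwf'.rank t)
    {s : TreeNode X E} {t : TreeNode X E'} (hst : s.cls ⊆ t.cls) {k n : ℕ}
    (hn : E n ≤ E' (t.level + k)) (hs : γ + n ≤ hwf.rank s) : γ + k ≤ hwf'.rank t := by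
  obtain ⟨s', hs's, hs'_level, hs'⟩ := hwf.exists_cls_subset_of_add_le_rank γ n s hs
  obtain ⟨t', ht'_level, hs't'⟩ :=
    exists_cls_superset hE s' (ℓ := t.level + k) ((hE.antitone (by omega)).trans hn)
  obtain ⟨x, hx⟩ := (nontrivial_cls hE s').nonempty
  have ht't : t'.cls ⊆ t.cls := cls_subset_of_mem hE' (by omega) (hst (hs's hx)) (hs't' hx)
  calc γ + k ≤ hwf'.rank t' + k := add_le_add_left (hγ s' t' hs't' hs') _
    _ ≤ hwf'.rank t := hwf'.rank_add_le_of_cls_subset hE' k ht't ht'_level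

lemma le_rank_of_cls_subset (hE : IsDecreasingEquivSeq E) (hE' : IsDecreasingEquivSeq E')
    (hwf : TreeWF X E) (hwf' : TreeWF X E') (hcof : ∀ ℓ, ∃ n, E n ≤ E' ℓ) {γ : Ordinal}
    (hγ : IsSuccPrelimit γ) {s : TreeNode X E} {t : TreeNode X E'} (hst : s.cls ⊆ t.cls)
    (hs : γ ≤ hwf.rank s) : γ ≤ hwf'.rank t := by
  induction γ using WellFoundedLT.induction generalizing s t with
  | _ γ ih =>
    refine Ordinal.le_of_forall_isSuccPrelimit_add_natCast_lt hγ
      fun γ₀ hγ₀ hγ₀_prelimit hγ₀_add k => ?_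
    obtain ⟨n, hn⟩ := hcof (t.level + (k + 1))
    have h := add_le_rank_of_cls_subset hE hE' hwf hwf'
      (fun _ _ => ih γ₀ hγ₀ hγ₀_prelimit) hst hn ((hγ₀_add n).le.trans hs)
    rwa [Nat.cast_add_one, ← add_assoc, Order.add_one_le_iff] at h

lemma le_treeRho_of_le_treeRho (hE : IsDecreasingEquivSeq E) (hE' : IsDecreasingEquivSeq E')
    (hcof : ∀ ℓ, ∃ n, E n ≤ E' ℓ) (hcof' : ∀ n, ∃ ℓ, E' ℓ ≤ E n) {γ : Ordinal}
    (hγ : IsSuccPrelimit γ) (h : γ ≤ treeRho X E) : γ ≤ treeRho X E' := by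
  by_cases hwf : TreeWF X E
  swap
  · rw [treeRho_eq_zero hwf, nonpos_iff_eq_zero] at h
    exact h ▸ zero_le
  have hwf' := hwf.of_cofinal hE hE' hcof'
  rw [treeRho_eq_iSup hwf] at h
  rw [treeRho_eq_iSup hwf']
  refine Ordinal.le_of_forall_isSuccPrelimit_add_natCast_lt hγ
    fun γ₀ _ hγ₀_prelimit hγ₀_add k => ?_
  obtain ⟨n₀, hn₀⟩ := hcof 0
  obtain ⟨n, hn⟩ := hcof k
  obtain ⟨s, hs⟩ := Ordinal.lt_iSup_iff.1 ((hγ₀_add (n + n₀)).trans_le h)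
  rw [Order.lt_succ_iff, Nat.cast_add, ← add_assoc] at hs
  obtain ⟨s', -, hs'_level, hs'⟩ := hwf.exists_cls_subset_of_add_le_rank _ n₀ s hs
  obtain ⟨t, ht_level, hst⟩ :=
    exists_cls_superset hE s' (ℓ := 0) ((hE.antitone (by omega)).trans hn₀)
  have hk : γ₀ + k ≤ hwf'.rank t :=
    add_le_rank_of_cls_subset hE hE' hwf hwf'
      (fun _ _ => le_rank_of_cls_subset hE hE' hwf hwf' hcof hγ₀_prelimit) hst
      (by rwa [ht_level, zero_add]) hs'
  exact hk.trans_lt ((Order.lt_succ _).trans_le (Ordinal.le_iSup _ t))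

lemma omegaPart_treeRho_le (hE : IsDecreasingEquivSeq E) (hE' : IsDecreasingEquivSeq E')
    (hcof : ∀ ℓ, ∃ n, E n ≤ E' ℓ) (hcof' : ∀ n, ∃ ℓ, E' ℓ ≤ E n) :
    omegaPart (treeRho X E) ≤ omegaPart (treeRho X E') :=
  omegaPart_le_omegaPart_of_forall_le fun _ hγ => le_treeRho_of_le_treeRho hE hE' hcof hcof' hγ

end Rank

section Dgnb

variable {G : Type u} [Group G] {X : Type*} [MulAction G X]

lemma subOrbit_equivalence (H : Subgroup G) : Equivalence (subOrbit H X) where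
  refl x := ⟨1, H.one_mem, one_smul G x⟩
  symm := by
    rintro x _ ⟨g, hg, rfl⟩
    exact ⟨g⁻¹, H.inv_mem hg, inv_smul_smul g x⟩
  trans := by
    rintro x _ _ ⟨g, hg, rfl⟩ ⟨g', hg', rfl⟩
    exact ⟨g' * g, H.mul_mem hg' hg, mul_smul g' g x⟩

lemma subOrbit_mono {H K : Subgroup G} (h : H ≤ K) : subOrbit H X ≤ subOrbit K X :=
  fun _ _ ⟨g, hg, hgxy⟩ => ⟨g, h hg, hgxy⟩

variable [TopologicalSpace G]

lemma Dgnb.isDecreasingEquivSeq_dgnbRel (𝒢 : Dgnb G) :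
    IsDecreasingEquivSeq (dgnbRel 𝒢 X) :=
  ⟨fun _ => subOrbit_equivalence _, antitone_nat_of_succ_le fun n => subOrbit_mono (𝒢.antitone n)⟩

lemma Dgnb.exists_dgnbRel_le (𝒢 𝒢' : Dgnb G) (ℓ : ℕ) : ∃ n, dgnbRel 𝒢 X n ≤ dgnbRel 𝒢' X ℓ :=
  (𝒢.basis _ ((𝒢'.isOpen ℓ).mem_nhds (𝒢'.seq ℓ).one_mem)).imp fun _ h => subOrbit_mono h

end Dgnb

theorem statement_14_general (G : Type) [Group G] [TopologicalSpace G] (X : Type) [MulAction G X]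
    (𝒢 𝒢' : Dgnb G) :
    omegaPart (treeRho X (dgnbRel 𝒢 X)) = omegaPart (treeRho X (dgnbRel 𝒢' X)) := by
  have h𝒢 : IsDecreasingEquivSeq (dgnbRel 𝒢 X) := 𝒢.isDecreasingEquivSeq_dgnbRel
  have h𝒢' : IsDecreasingEquivSeq (dgnbRel 𝒢' X) := 𝒢'.isDecreasingEquivSeq_dgnbRel
  exact le_antisymm
    (omegaPart_treeRho_le h𝒢 h𝒢' (𝒢.exists_dgnbRel_le 𝒢') (𝒢'.exists_dgnbRel_le 𝒢))
    (omegaPart_treeRho_le h𝒢' h𝒢 (𝒢'.exists_dgnbRel_le 𝒢) (𝒢.exists_dgnbRel_le 𝒢'))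

theorem statement_14 (G : Type) [Group G] [TopologicalSpace G] [IsTopologicalGroup G]
    [PolishSpace G] (hna : IsNonArch G) (hcli : IsCLI G)
    (X : Type) [TopologicalSpace X] [DiscreteTopology X] [Countable X]
    [MulAction G X] [ContinuousSMul G X] (𝒢 𝒢' : Dgnb G) :
    omegaPart (treeRho X (dgnbRel 𝒢 X)) = omegaPart (treeRho X (dgnbRel 𝒢' X)) :=
  statement_14_general G X 𝒢 𝒢'

end
end
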